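/- Let X and V be complex Hilbert spaces with X separable, and let A : X → X* be a positive linear operator with factorization A = S*TS, where S : X → V is compact and injective and T : V → V is bounded and coercive on Range(S). Let {f_α}_{α>0} be a family of filter functions for the spectral data of A, and for ℓ ∈ X* let x_α denote the regularized solution of Ax = ℓ. Then ℓ ∈ Range(S*) if and only if liminf_{α→0} ⟨x_α, Ax_α⟩_{X×X*} < ∞. -/

import Mathlib

open Complex InnerProductSpace Filter Topology ENNReal TopologicalSpace

noncomputable section

local notation "⟪" x ", " y "⟫" => @inner ℂ _ _ x y

/-- `X*`: the continuous dual of a complex Hilbert space `X`, modeled as the space of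
continuous conjugate-linear functionals, so that the dual pairing
`⟨x, ℓ⟩_{X×X*} := conj (ℓ x)` is sesquilinear (linear in `x`, conjugate-linear in `ℓ`). -/
abbrev ADual (X : Type*) [NormedAddCommGroup X] [InnerProductSpace ℂ X] := X →L⋆[ℂ] ℂ

section defs
variable {X : Type*} [NormedAddCommGroup X] [InnerProductSpace ℂ X]

/-- The sesquilinear dual pairing `⟨x, ℓ⟩_{X×X*}`. -/
def dpair (x : X) (ℓ : ADual X) : ℂ := starRingEnd ℂ (ℓ x)

variable [CompleteSpace X]

/-- `J : X* → X`, the Riesz isometry, determined by `(x, Jℓ)_X = ⟨x, ℓ⟩_{X×X*}`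
(with the paper's inner product, linear in the first slot; in Mathlib's convention
this reads `⟪Jℓ, x⟫ = conj (ℓ x)` for all `x`). -/
def rieszJ (ℓ : ADual X) : X :=
  (InnerProductSpace.toDual ℂ X).symm
    { toFun := fun x => starRingEnd ℂ (ℓ x)
      map_add' := fun x y => by simp
      map_smul' := fun c x => by simp [mul_comm]
      cont := continuous_star.comp ℓ.continuous }

/-- A bounded operator `A : X → X*` is positive if `⟨x, Ax⟩_{X×X*} > 0`
(i.e. it is a positive real number) for every `x ≠ 0`. -/
def IsPositiveOp (A : X →L[ℂ] ADual X) : Prop :=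
  ∀ x : X, x ≠ 0 → 0 < (dpair x (A x)).re ∧ (dpair x (A x)).im = 0

/-- Spectral data `{λ_n; x_n; ℓ_n}` of a positive compact operator `A : X → X*`:
a nonincreasing sequence `λ_n > 0` tending to `0`, an orthonormal basis `x_n` of `X`
of eigenvectors of `JA` with `(JA)x_n = λ_n x_n`, and the dual basis `ℓ_n = J⁻¹x_n`. -/
structure SpectralData (A : X →L[ℂ] ADual X) (lam : ℕ → ℝ) (e : ℕ → X)
    (l : ℕ → ADual X) : Prop where
  pos : ∀ n, 0 < lam n
  anti : Antitone lam
  tendsto_zero : Tendsto lam atTop (𝓝 0)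
  orthonormal : Orthonormal ℂ e
  complete : (Submodule.span ℂ (Set.range e)).topologicalClosure = ⊤
  eig : ∀ n, rieszJ (A (e n)) = (lam n : ℂ) • e n
  dual_basis : ∀ n, rieszJ (l n) = e n

/-- A family of filter functions `f_α : (0, λ₁] → [0, ∞)`, `α > 0`, with
`f_α(t) → 1` as `α → 0` for every `t ∈ (0, λ₁]` and `f_α(t) ≤ C_reg`. -/
def IsFilterFamily (lam : ℕ → ℝ) (Creg : ℝ) (f : ℝ → ℝ → ℝ) : Prop :=
  0 < Creg ∧
    (∀ t ∈ Set.Ioc (0 : ℝ) (lam 0), Tendsto (fun α => f α t) (𝓝[>] (0 : ℝ)) (𝓝 1)) ∧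
    (∀ α > (0 : ℝ), ∀ t ∈ Set.Ioc (0 : ℝ) (lam 0), 0 ≤ f α t ∧ f α t ≤ Creg)

/-- `x_α`, the regularized solution of `Ax = ℓ` for the filter family `f`:
`x_α = Σ_n (f_α(λ_n)/λ_n) conj(⟨x_n, ℓ⟩) x_n`. -/
def IsRegSolution (lam : ℕ → ℝ) (e : ℕ → X) (f : ℝ → ℝ → ℝ) (ℓ : ADual X)
    (xa : ℝ → X) : Prop :=
  ∀ α : ℝ, 0 < α →
    HasSum
      (fun n => (((f α (lam n) / lam n : ℝ) : ℂ) * starRingEnd ℂ (dpair (e n) ℓ)) • e n)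
      (xa α)

end defs

section adj
variable {X V : Type*} [NormedAddCommGroup X] [InnerProductSpace ℂ X] [CompleteSpace X]
  [NormedAddCommGroup V] [InnerProductSpace ℂ V] [CompleteSpace V]

/-- The adjoint `S* : V → X*` of a bounded operator `S : X → V`, determined by
`(Sx, v)_V = ⟨x, S*v⟩_{X×X*}` for all `x ∈ X`, `v ∈ V`. -/
def hadj (S : X →L[ℂ] V) : V →L[ℂ] ADual X :=
  LinearMap.mkContinuous
    { toFun := fun v =>
        { toFun := fun x => ⟪S x, v⟫
          map_add' := fun x y => by simp [inner_add_left]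
          map_smul' := fun c x => by simp [inner_smul_left, mul_comm]
          cont := (S.continuous.inner continuous_const) }
      map_add' := fun v w => by ext x; simp [inner_add_right]
      map_smul' := fun c v => by ext x; simp [inner_smul_right] }
    ‖S‖
    (fun v => by
      apply ContinuousLinearMap.opNorm_le_bound
      · positivity
      · intro x
        calc ‖⟪S x, v⟫‖ ≤ ‖S x‖ * ‖v‖ := norm_inner_le_norm _ _
          _ ≤ (‖S‖ * ‖x‖) * ‖v‖ := by gcongr; exact S.le_opNorm x
          _ = ‖S‖ * ‖v‖ * ‖x‖ := by ring)

/-- A bounded operator `T : V → V` is coercive on the range of `S : X → V` if there is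
`β > 0` with `β‖Sx‖² ≤ (Sx, TSx)_V` for all `x ∈ X`. -/
def CoerciveOnRange (S : X →L[ℂ] V) (T : V →L[ℂ] V) : Prop :=
  ∃ β : ℝ, 0 < β ∧ ∀ x : X, β * ‖S x‖ ^ 2 ≤ (⟪T (S x), S x⟫).re

end adj

/-!
Expanding in the eigenbasis, `⟨x, Ax⟩ = Σ λ_n |⟨x_n, x⟩|²`, so
`⟨x_α, Ax_α⟩ = Σ f_α(λ_n)² |ℓ(x_n)|² / λ_n`. Since `0 ≤ f_α ≤ C_reg` and `f_α → 1`, the liminf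
is finite iff the Picard series `Σ |ℓ(x_n)|² / λ_n` converges. By Cauchy–Schwarz in the
eigenbasis, and by testing `ℓ` on finite combinations of eigenvectors for the converse, the
Picard series converges iff `|ℓ x|² ≤ C ⟨x, Ax⟩` for some `C`. Coercivity makes
`⟨x, Ax⟩ = (TSx, Sx)` comparable to `‖Sx‖²`, so this is the bound `|ℓ x| ≤ K ‖Sx‖`, which
characterises `Range(S*)` by Hahn–Banach and the Riesz representation in `V`.
-/

lemma Orthonormal.inner_eq_of_hasSum {𝕜 E ι : Type*} [RCLike 𝕜] [NormedAddCommGroup E]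
    [InnerProductSpace 𝕜 E] {e : ι → E} (he : Orthonormal 𝕜 e) {a : ι → 𝕜} {x : E}
    (hx : HasSum (fun n => a n • e n) x) (m : ι) : inner 𝕜 (e m) x = a m := by
  classical
  have hterm : (fun n => innerSL 𝕜 (e m) (a n • e n)) = fun n => if n = m then a m else 0 := by
    funext n
    rcases eq_or_ne n m with rfl | hnm
    · simp [he.1 n]
    · simp [he.2 hnm.symm, hnm]
  have h := hx.mapL (innerSL 𝕜 (e m))
  rw [hterm] at h
  exact h.unique (hasSum_ite_eq m (a m))

section Spectral

variable {X : Type*} [NormedAddCommGroup X] [InnerProductSpace ℂ X] [CompleteSpace X]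

lemma inner_rieszJ_left (ℓ : ADual X) (y : X) : ⟪rieszJ ℓ, y⟫ = starRingEnd ℂ (ℓ y) :=
  InnerProductSpace.toDual_symm_apply

lemma apply_apply_of_rieszJ_eq_smul {A : X →L[ℂ] ADual X} {u : X} {c : ℂ}
    (h : rieszJ (A u) = c • u) (y : X) : A u y = c * ⟪y, u⟫ := by
  have := congrArg (starRingEnd ℂ) (inner_rieszJ_left (A u) y)
  rwa [h, inner_smul_left, map_mul, Complex.conj_conj, Complex.conj_conj, inner_conj_symm,
    eq_comm] at this

section

variable {ι : Type*} {A : X →L[ℂ] ADual X} {lam : ι → ℝ} {e : ι → X}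

lemma hasSum_re_dpair_apply (he : Orthonormal ℂ e)
    (heig : ∀ n, rieszJ (A (e n)) = (lam n : ℂ) • e n) {a : ι → ℂ} {x : X}
    (hx : HasSum (fun n => a n • e n) x) :
    HasSum (fun n => lam n * ‖a n‖ ^ 2) (dpair x (A x)).re := by
  have h := Complex.hasSum_re
    (hx.mapL ((ContinuousLinearMap.apply' ℂ (starRingEnd ℂ) x).comp A))
  convert h using 1
  · funext n
    have hterm : A (a n • e n) x = lam n * (a n * starRingEnd ℂ (a n)) := by
      rw [map_smul, smul_apply, apply_apply_of_rieszJ_eq_smul (heig n),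
        ← inner_conj_symm, he.inner_eq_of_hasSum hx, smul_eq_mul]
      ring
    change _ = (A (a n • e n) x).re
    rw [hterm, Complex.mul_conj, ← Complex.ofReal_mul, Complex.ofReal_re,
      Complex.normSq_eq_norm_sq]
  · simp [dpair]

lemma summable_of_forall_sq_norm_le (he : Orthonormal ℂ e)
    (heig : ∀ n, rieszJ (A (e n)) = (lam n : ℂ) • e n) (hlam : ∀ n, 0 < lam n)
    {ℓ : ADual X} {C : ℝ} (hC : ∀ x, ‖ℓ x‖ ^ 2 ≤ C * (dpair x (A x)).re) :
    Summable fun n => ‖ℓ (e n)‖ ^ 2 / lam n := by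
  classical
  refine summable_of_sum_le (c := max C 0) (fun n => by have := hlam n; positivity) fun F => ?_
  set s := ∑ n ∈ F, ‖ℓ (e n)‖ ^ 2 / lam n
  -- test `ℓ` on `x = Σ_{n ∈ F} (ℓ(x_n) / λ_n) x_n`, for which `ℓ x = ⟨x, Ax⟩ = s`
  let a : ι → ℂ := fun n => if n ∈ F then ((lam n : ℂ))⁻¹ * ℓ (e n) else 0
  set xF := ∑ n ∈ F, a n • e n with hxF
  have hx : HasSum (fun n => a n • e n) xF :=
    hasSum_sum_of_ne_finset_zero fun n hn => by simp [a, hn]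
  have hQ : (dpair xF (A xF)).re = s := by
    rw [(hasSum_re_dpair_apply he heig hx).unique
      (hasSum_sum_of_ne_finset_zero (s := F) fun n hn => by simp [a, hn])]
    refine Finset.sum_congr rfl fun n hn => ?_
    have := (hlam n).ne'
    simp only [a, if_pos hn, norm_mul, norm_inv, Complex.norm_real, Real.norm_eq_abs,
      abs_of_pos (hlam n)]
    field_simp
  have hL : ℓ xF = s := by
    rw [hxF, map_sum, Complex.ofReal_sum]
    refine Finset.sum_congr rfl fun n hn => ?_
    have := (hlam n).ne'
    simp only [a, if_pos hn, ContinuousLinearMap.map_smulₛₗ, map_mul, map_inv₀,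
      Complex.conj_ofReal, smul_eq_mul]
    rw [mul_assoc, Complex.conj_mul', Complex.ofReal_div, Complex.ofReal_pow]
    field_simp
  have hs : s ^ 2 ≤ C * s := by
    simpa [hQ, hL, Complex.norm_real, Real.norm_eq_abs, sq_abs] using hC xF
  have hs0 : 0 ≤ s := Finset.sum_nonneg fun n _ => by have := hlam n; positivity
  rcases hs0.eq_or_lt with h | h
  · exact h ▸ le_max_right C 0
  · exact (le_of_mul_le_mul_right (by nlinarith) h).trans (le_max_left C 0)

lemma sq_norm_le_tsum_mul_of_summable (he : Orthonormal ℂ e)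
    (hspan : (Submodule.span ℂ (Set.range e)).topologicalClosure = ⊤)
    (heig : ∀ n, rieszJ (A (e n)) = (lam n : ℂ) • e n) (hlam : ∀ n, 0 < lam n)
    {ℓ : ADual X} (hsum : Summable fun n => ‖ℓ (e n)‖ ^ 2 / lam n) (x : X) :
    ‖ℓ x‖ ^ 2 ≤ (∑' n, ‖ℓ (e n)‖ ^ 2 / lam n) * (dpair x (A x)).re := by
  let B : HilbertBasis ι ℂ X := HilbertBasis.mk he hspan.ge
  set a : ι → ℂ := fun n => B.repr x n
  have hx : HasSum (fun n => a n • e n) x := by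
    simpa only [B, HilbertBasis.coe_mk] using B.hasSum_repr x
  have hQ := hasSum_re_dpair_apply he heig hx
  have hL : HasSum (fun n => starRingEnd ℂ (a n) * ℓ (e n)) (ℓ x) := by
    simpa [ContinuousLinearMap.map_smulₛₗ] using hx.mapL ℓ
  rw [mul_comm]
  have hL' : Tendsto (fun F : Finset ι => ∑ n ∈ F, starRingEnd ℂ (a n) * ℓ (e n)) atTop
      (𝓝 (ℓ x)) := hL
  refine le_of_tendsto' (hL'.norm.pow 2) fun F => ?_
  calc ‖∑ n ∈ F, starRingEnd ℂ (a n) * ℓ (e n)‖ ^ 2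
      ≤ (∑ n ∈ F, ‖a n‖ * ‖ℓ (e n)‖) ^ 2 := by
        gcongr
        simpa only [norm_mul, RCLike.norm_conj] using
          norm_sum_le F fun n => starRingEnd ℂ (a n) * ℓ (e n)
    _ ≤ (∑ n ∈ F, lam n * ‖a n‖ ^ 2) * ∑ n ∈ F, ‖ℓ (e n)‖ ^ 2 / lam n := by
        refine Finset.sum_sq_le_sum_mul_sum_of_sq_le_mul F (fun n _ => ?_) (fun n _ => ?_)
          fun n _ => le_of_eq ?_
        · have := hlam n; positivity
        · have := hlam n; positivity
        · have := (hlam n).ne'; field_simp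
    _ ≤ (dpair x (A x)).re * ∑' n, ‖ℓ (e n)‖ ^ 2 / lam n := by
        refine mul_le_mul (sum_le_hasSum F (fun n _ => by have := hlam n; positivity) hQ)
          (hsum.sum_le_tsum F fun n _ => by have := hlam n; positivity)
          (Finset.sum_nonneg fun n _ => by have := hlam n; positivity)
          (hQ.nonneg fun n => by have := hlam n; positivity)

end

variable {A : X →L[ℂ] ADual X} {lam : ℕ → ℝ} {e : ℕ → X} {l : ℕ → ADual X}

lemma SpectralData.exists_sq_norm_le_mul_iff_summable (hspec : SpectralData A lam e l)
    (ℓ : ADual X) :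
    (∃ C, ∀ x, ‖ℓ x‖ ^ 2 ≤ C * (dpair x (A x)).re) ↔
      Summable fun n => ‖ℓ (e n)‖ ^ 2 / lam n :=
  ⟨fun ⟨_, hC⟩ => summable_of_forall_sq_norm_le hspec.orthonormal hspec.eig hspec.pos hC,
    fun hsum => ⟨_, sq_norm_le_tsum_mul_of_summable hspec.orthonormal hspec.complete hspec.eig
      hspec.pos hsum⟩⟩

lemma hasSum_re_dpair_of_isRegSolution (he : Orthonormal ℂ e)
    (heig : ∀ n, rieszJ (A (e n)) = (lam n : ℂ) • e n) (hlam : ∀ n, 0 < lam n)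
    {f : ℝ → ℝ → ℝ} {ℓ : ADual X} {xa : ℝ → X} (hxa : IsRegSolution lam e f ℓ xa)
    {α : ℝ} (hα : 0 < α) :
    HasSum (fun n => f α (lam n) ^ 2 * (‖ℓ (e n)‖ ^ 2 / lam n)) (dpair (xa α) (A (xa α))).re := by
  convert hasSum_re_dpair_apply he heig (hxa α hα) using 2 with n
  have := (hlam n).ne'
  rw [norm_mul, Complex.norm_real, Real.norm_eq_abs, mul_pow, sq_abs, dpair, Complex.conj_conj]
  field_simp

end Spectral

lemma liminf_ofReal_lt_top_iff_summable {α ι : Type*} {L : Filter α} [L.NeBot]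
    {w : α → ι → ℝ} {p : ι → ℝ} {q : α → ℝ} {C : ℝ} (hp : 0 ≤ p)
    (hw : ∀ᶠ a in L, ∀ i, |w a i| ≤ C) (hlim : ∀ i, Tendsto (fun a => w a i) L (𝓝 1))
    (hq : ∀ᶠ a in L, HasSum (fun i => w a i ^ 2 * p i) (q a)) :
    liminf (fun a => ENNReal.ofReal (q a)) L < ⊤ ↔ Summable p := by
  constructor
  · intro h
    obtain ⟨M, -, hM, -⟩ := ENNReal.lt_iff_exists_real_btwn.mp h
    have hfreq : ∃ᶠ a in L, q a ≤ M :=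
      (frequently_lt_of_liminf_lt (by isBoundedDefault) hM).mono fun a ha =>
        (ENNReal.ofReal_lt_ofReal_iff'.mp ha).1.le
    refine summable_of_sum_le hp fun F => le_of_tendsto_of_frequently ?_
      ((hfreq.and_eventually hq).mono fun a ha =>
        (sum_le_hasSum F (fun i _ => mul_nonneg (sq_nonneg _) (hp i)) ha.2).trans ha.1)
    simpa using tendsto_finsetSum F fun i _ => ((hlim i).pow 2).mul_const (p i)
  · intro hsum
    have hbound : ∀ᶠ a in L, q a ≤ C ^ 2 * ∑' i, p i :=
      (hw.and hq).mono fun a ha => hasSum_le (fun i => mul_le_mul_of_nonneg_right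
        (sq_le_sq' (abs_le.mp (ha.1 i)).1 (abs_le.mp (ha.1 i)).2) (hp i)) ha.2
        (hsum.hasSum.mul_left _)
    exact (liminf_le_of_frequently_le' (hbound.mono fun a ha =>
      ENNReal.ofReal_le_ofReal ha).frequently).trans_lt ENNReal.ofReal_lt_top

section Adjoint

variable {X V : Type*} [NormedAddCommGroup X] [InnerProductSpace ℂ X]
  [NormedAddCommGroup V] [InnerProductSpace ℂ V]

lemma CoerciveOnRange.exists_norm_le_iff {S : X →L[ℂ] V} {T : V →L[ℂ] V}
    (hT : CoerciveOnRange S T) (φ : X → ℂ) :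
    (∃ K, ∀ x, ‖φ x‖ ≤ K * ‖S x‖) ↔ ∃ C, ∀ x, ‖φ x‖ ^ 2 ≤ C * (⟪T (S x), S x⟫).re := by
  obtain ⟨β, hβ, hcoer⟩ := hT
  constructor
  · rintro ⟨K, hK⟩
    refine ⟨K ^ 2 / β, fun x => ?_⟩
    calc ‖φ x‖ ^ 2 ≤ (K * ‖S x‖) ^ 2 := pow_le_pow_left₀ (norm_nonneg _) (hK x) 2
      _ = K ^ 2 / β * (β * ‖S x‖ ^ 2) := by field_simp
      _ ≤ K ^ 2 / β * (⟪T (S x), S x⟫).re := by gcongr; exact hcoer x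
  · rintro ⟨C, hC⟩
    refine ⟨√(|C| * ‖T‖), fun x => ?_⟩
    rw [← Real.sqrt_sq (norm_nonneg (S x)), ← Real.sqrt_mul (by positivity),
      Real.le_sqrt (norm_nonneg _) (by positivity)]
    calc ‖φ x‖ ^ 2 ≤ C * (⟪T (S x), S x⟫).re := hC x
      _ ≤ |C| * ‖⟪T (S x), S x⟫‖ := (le_abs_self _).trans
          (by rw [abs_mul]; gcongr; exact Complex.abs_re_le_norm _)
      _ ≤ |C| * (‖T‖ * ‖S x‖ ^ 2) := by
          gcongr
          calc ‖⟪T (S x), S x⟫‖ ≤ ‖T (S x)‖ * ‖S x‖ := norm_inner_le_norm _ _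
            _ ≤ ‖T‖ * ‖S x‖ * ‖S x‖ := by gcongr; exact T.le_opNorm _
            _ = ‖T‖ * ‖S x‖ ^ 2 := by ring
      _ = |C| * ‖T‖ * ‖S x‖ ^ 2 := by ring

lemma hadj_apply (S : X →L[ℂ] V) (v : V) (x : X) : hadj S v x = ⟪S x, v⟫ := rfl

lemma dpair_hadj_comp_apply (S : X →L[ℂ] V) (T : V →L[ℂ] V) (x : X) :
    dpair x ((hadj S).comp (T.comp S) x) = ⟪T (S x), S x⟫ :=
  inner_conj_symm _ _

variable [CompleteSpace X] [CompleteSpace V]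

lemma mem_range_hadj_iff (S : X →L[ℂ] V) (ℓ : ADual X) :
    ℓ ∈ Set.range (hadj S) ↔ ∃ K, ∀ x, ‖ℓ x‖ ≤ K * ‖S x‖ := by
  constructor
  · rintro ⟨v, rfl⟩
    exact ⟨‖v‖, fun x => (norm_inner_le_norm _ _).trans_eq (mul_comm _ _)⟩
  · rintro ⟨K, hK⟩
    -- `φ = conj ∘ ℓ` is linear; it factors through `S` because it vanishes on `ker S`
    let φ : X →L[ℂ] ℂ := InnerProductSpace.toDual ℂ X (rieszJ ℓ)
    have hφ : ∀ x, φ x = starRingEnd ℂ (ℓ x) := inner_rieszJ_left ℓ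
    let S' : X →ₗ[ℂ] V := S
    have hker : LinearMap.ker S' ≤ LinearMap.ker (φ : X →ₗ[ℂ] ℂ) := fun x hx => by
      have := hK x
      simp_all [S']
    let ψ : LinearMap.range S' →ₗ[ℂ] ℂ :=
      (LinearMap.ker S').liftQ (φ : X →ₗ[ℂ] ℂ) hker ∘ₗ S'.quotKerEquivRange.symm.toLinearMap
    have hψ : ∀ x, ψ ⟨S' x, LinearMap.mem_range_self S' x⟩ = starRingEnd ℂ (ℓ x) := fun x => by
      rw [← hφ]
      exact congrArg ((LinearMap.ker S').liftQ (φ : X →ₗ[ℂ] ℂ) hker)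
        (S'.quotKerEquivRange_symm_apply_image x _)
    let ψc : StrongDual ℂ (LinearMap.range S') := ψ.mkContinuous K fun w => by
      obtain ⟨_, x, rfl⟩ := w
      rw [hψ, RCLike.norm_conj]
      exact hK x
    obtain ⟨g, hg, -⟩ := exists_extension_norm_eq _ ψc
    refine ⟨(InnerProductSpace.toDual ℂ V).symm g, ContinuousLinearMap.ext fun x => ?_⟩
    have hgS : g (S x) = starRingEnd ℂ (ℓ x) :=
      (hg ⟨S' x, LinearMap.mem_range_self S' x⟩).trans (hψ x)
    rw [hadj_apply, ← inner_conj_symm, InnerProductSpace.toDual_symm_apply, hgS,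
      Complex.conj_conj]

end Adjoint

theorem regularized_factorization_method_general
    {X V : Type*}
    [NormedAddCommGroup X] [InnerProductSpace ℂ X] [CompleteSpace X]
    [NormedAddCommGroup V] [InnerProductSpace ℂ V] [CompleteSpace V]
    (A : X →L[ℂ] ADual X)
    (S : X →L[ℂ] V) (T : V →L[ℂ] V)
    (hAS : A = (hadj S).comp (T.comp S))
    (hT : CoerciveOnRange S T)
    (lam : ℕ → ℝ) (e : ℕ → X) (l : ℕ → ADual X)
    (hspec : SpectralData A lam e l)
    (Creg : ℝ) (f : ℝ → ℝ → ℝ) (hf : IsFilterFamily lam Creg f)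
    (ℓ : ADual X) (xa : ℝ → X) (hxa : IsRegSolution lam e f ℓ xa) :
    ℓ ∈ Set.range ⇑(hadj S) ↔
      Filter.liminf (fun α => ENNReal.ofReal ((dpair (xa α) (A (xa α))).re))
        (𝓝[>] (0 : ℝ)) < ⊤ := by
  obtain ⟨-, hf_lim, hf_bdd⟩ := hf
  have hQ : ∀ x, dpair x (A x) = ⟪T (S x), S x⟫ := fun x => hAS ▸ dpair_hadj_comp_apply S T x
  have hlam : ∀ n, lam n ∈ Set.Ioc 0 (lam 0) := fun n => ⟨hspec.pos n, hspec.anti n.zero_le⟩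
  calc ℓ ∈ Set.range (hadj S) ↔ ∃ K, ∀ x, ‖ℓ x‖ ≤ K * ‖S x‖ := mem_range_hadj_iff S ℓ
    _ ↔ ∃ C, ∀ x, ‖ℓ x‖ ^ 2 ≤ C * (dpair x (A x)).re := by
        simp only [hQ]; exact hT.exists_norm_le_iff ℓ
    _ ↔ Summable fun n => ‖ℓ (e n)‖ ^ 2 / lam n := hspec.exists_sq_norm_le_mul_iff_summable ℓ
    _ ↔ _ := (liminf_ofReal_lt_top_iff_summable (L := 𝓝[>] (0 : ℝ))
        (fun n => by have := hspec.pos n; positivity)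
        (eventually_mem_nhdsWithin.mono fun α hα n =>
          (abs_of_nonneg (hf_bdd α hα _ (hlam n)).1).trans_le (hf_bdd α hα _ (hlam n)).2)
        (fun n => hf_lim _ (hlam n))
        (eventually_mem_nhdsWithin.mono fun α hα => hasSum_re_dpair_of_isRegSolution
          hspec.orthonormal hspec.eig hspec.pos hxa hα)).symm

/-- Regularized Factorization Method: if the positive operator
`A = S*TS` with `S` compact and injective and `T` coercive on `Range(S)`, and `x_α`
is the regularized solution of `Ax = ℓ` for a family of filter functions, then
`ℓ ∈ Range(S*)` iff `liminf_{α→0} ⟨x_α, Ax_α⟩ < ∞`. -/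
theorem regularized_factorization_method
    {X V : Type*}
    [NormedAddCommGroup X] [InnerProductSpace ℂ X] [CompleteSpace X] [SeparableSpace X]
    [NormedAddCommGroup V] [InnerProductSpace ℂ V] [CompleteSpace V]
    (A : X →L[ℂ] ADual X) (hpos : IsPositiveOp A)
    (S : X →L[ℂ] V) (T : V →L[ℂ] V)
    (hAS : A = (hadj S).comp (T.comp S))
    (hScpt : IsCompactOperator ⇑S) (hSinj : Function.Injective ⇑S)
    (hT : CoerciveOnRange S T)
    (lam : ℕ → ℝ) (e : ℕ → X) (l : ℕ → ADual X)
    (hspec : SpectralData A lam e l)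
    (Creg : ℝ) (f : ℝ → ℝ → ℝ) (hf : IsFilterFamily lam Creg f)
    (ℓ : ADual X) (xa : ℝ → X) (hxa : IsRegSolution lam e f ℓ xa) :
    ℓ ∈ Set.range ⇑(hadj S) ↔
      Filter.liminf (fun α => ENNReal.ofReal ((dpair (xa α) (A (xa α))).re))
        (𝓝[>] (0 : ℝ)) < ⊤ :=
  regularized_factorization_method_general A S T hAS hT lam e l hspec Creg f hf ℓ xa hxa
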